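/- arXiv:1002.4350 — 3 statements merged into one kernel-verified Lean document; each statement's English description precedes it below -/
import Mathlib

section
/- Let (Γ,w) be a stable weighted graph of genus g ≥ 2 and d an integer. For a balanced multidegree d of total degree d on (Γ,w), define α(d) : V² → ℤ by α(d)(c) = Σ_{v∈c} d(v). Then α(d) is a balanced multidegree of total degree d on the contracted weighted graph (Γ²,w²); thus α defines a map B̄_d(Γ,w) → B̄_d(Γ²,w²). -/
/-!
The relation `≈` is the connected-component relation of the graph of bridges, and that graph is a
forest: a cycle through a bridge would keep its endpoints connected after the bridge is removed.
So each class `c` spans a tree with `#c - 1` bridges. Merging `c` into one vertex raises `w_A` by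
`2 #c - 2` through the vertex terms and lowers it by `2 (#c - 1)` because the bridges no longer
count in the valencies, so `w_A`, and with it the genus, is unchanged. Edges between distinct
classes are the edges of `Γ` between their fibres, so `δ_A`, `d_A` and hence `m_A` on `Γ²` are
those of the preimage of `A` in `Γ`, and balancedness is inherited.
-/

open Finset

noncomputable section
open scoped Classical

variable {V : Type} [Fintype V] [DecidableEq V]

/-- The simple graph underlying a multigraph with multiplicity function `k`:
`u` and `v` are adjacent iff `u ≠ v` and some edge joins them. -/
def graphOf (k : V → V → ℕ) : SimpleGraph V where
  Adj u v := u ≠ v ∧ (0 < k u v ∨ 0 < k v u)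
  symm := ⟨fun u v h => ⟨h.1.symm, h.2.symm⟩⟩
  loopless := ⟨fun v h => h.1 rfl⟩

/-- The number of edges of a multigraph: loops plus half the ordered count. -/
def numEdges (k : V → V → ℕ) : ℕ :=
  (∑ v, k v v) + (∑ u, ∑ v ∈ Finset.univ.erase u, k u v) / 2

/-- The genus of a weighted graph: `∑ w(v) + b₁`, with `b₁ = #E - #V + 1`. -/
def genus (k : V → V → ℕ) (w : V → ℕ) : ℤ :=
  (∑ v, (w v : ℤ)) + ((numEdges k : ℤ) - (Fintype.card V : ℤ) + 1)

/-- Stability: connected, and each weight-zero vertex has valency at least 3. -/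
def IsStable (k : V → V → ℕ) (w : V → ℕ) : Prop :=
  (graphOf k).Connected ∧
    ∀ v, w v = 0 → 3 ≤ 2 * k v v + ∑ u ∈ Finset.univ.erase v, k u v

/-- `δ_A`: the number of edges joining `A` to its complement. -/
def deltaA (k : V → V → ℕ) (A : Finset V) : ℤ :=
  ∑ u ∈ A, ∑ v ∈ Aᶜ, (k u v : ℤ)

/-- `w_A = Σ_{v∈A} (2w(v) − 2 + 2k(v,v) + Σ_{u≠v} k(u,v))`. -/
def wA (k : V → V → ℕ) (w : V → ℕ) (A : Finset V) : ℤ :=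
  ∑ v ∈ A, (2 * (w v : ℤ) - 2 + 2 * (k v v : ℤ) + ∑ u ∈ Finset.univ.erase v, (k u v : ℤ))

/-- `d_A`: the total degree of a multidegree on the subset `A`. -/
def degA (d : V → ℤ) (A : Finset V) : ℤ := ∑ v ∈ A, d v

/-- `m_A(d) = d·w_A/(2g−2) − δ_A/2 ∈ ℚ`. -/
def mA (k : V → V → ℕ) (w : V → ℕ) (D : ℤ) (A : Finset V) : ℚ :=
  (D : ℚ) * (wA k w A : ℚ) / ((2 * genus k w - 2 : ℤ) : ℚ) - (deltaA k A : ℚ) / 2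

/-- A balanced multidegree of total degree `D`. -/
def IsBalanced (k : V → V → ℕ) (w : V → ℕ) (D : ℤ) (d : V → ℤ) : Prop :=
  degA d Finset.univ = D ∧ ∀ A : Finset V, mA k w D A ≤ (degA d A : ℚ)

/-- A strictly balanced multidegree of total degree `D`. -/
def IsStrictlyBalanced (k : V → V → ℕ) (w : V → ℕ) (D : ℤ) (d : V → ℤ) : Prop :=
  IsBalanced k w D d ∧
    ∀ A : Finset V, A ≠ ∅ → A ≠ Finset.univ → mA k w D A < (degA d A : ℚ)

/-- `(Γ,w)` is `d`-general if every balanced multidegree of total degree `d`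
is strictly balanced. -/
def IsDGeneral (k : V → V → ℕ) (w : V → ℕ) (D : ℤ) : Prop :=
  ∀ d : V → ℤ, IsBalanced k w D d → IsStrictlyBalanced k w D d

/-- The generator `c_v` of the lattice `Λ`. -/
def cvec (k : V → V → ℕ) (v : V) : V → ℤ := fun u =>
  if u = v then -(∑ x ∈ Finset.univ.erase v, (k x v : ℤ)) else (k u v : ℤ)

/-- The lattice `Λ ⊆ ℤ^V` generated by the `c_v`. -/
def Lambda (k : V → V → ℕ) : AddSubgroup (V → ℤ) :=
  AddSubgroup.closure (Set.range (cvec k))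

/-- The total-degree homomorphism `ℤ^V → ℤ`. -/
def sumHom (V : Type) [Fintype V] : (V → ℤ) →+ ℤ :=
  { toFun := fun d => ∑ v, d v
    map_zero' := by simp
    map_add' := fun a b => by simp [Finset.sum_add_distrib] }

/-- `Z = {d ∈ ℤ^V : Σ_v d(v) = 0}`. -/
def Zsub (V : Type) [Fintype V] : AddSubgroup (V → ℤ) := (sumHom V).ker

/-- Remove the edge(s) joining `a` and `b` from the multigraph. -/
def removeEdge (k : V → V → ℕ) (a b : V) : V → V → ℕ := fun u v =>
  if (u = a ∧ v = b) ∨ (u = b ∧ v = a) then 0 else k u v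

/-- `a`–`b` is a bridge: a single non-loop edge whose removal disconnects the graph. -/
def IsBridge (k : V → V → ℕ) (a b : V) : Prop :=
  a ≠ b ∧ k a b = 1 ∧ ¬ (graphOf (removeEdge k a b)).Connected

/-- `A` induces a connected sub-multigraph. -/
def IsConnectedSubset (k : V → V → ℕ) (A : Finset V) : Prop :=
  ((graphOf k).induce (A : Set V)).Connected

/-- The equivalence relation `≈` on `V` generated by bridges. -/
def contractSetoid (k : V → V → ℕ) : Setoid V :=
  ⟨Relation.EqvGen (fun u v => IsBridge k u v), Relation.EqvGen.is_equivalence _⟩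

/-- The vertex set `V² = V/≈` of the contracted graph `Γ²`. -/
def V2 (k : V → V → ℕ) : Type := Quotient (contractSetoid k)

instance (k : V → V → ℕ) : Finite (V2 k) := Quotient.finite _

instance (k : V → V → ℕ) : Fintype (V2 k) := Fintype.ofFinite _

/-- The fiber of the quotient map `φ : V → V²` over a class `c`. -/
def fiber (k : V → V → ℕ) (c : V2 k) : Finset V :=
  Finset.univ.filter (fun v => Quotient.mk (contractSetoid k) v = c)

/-- The multiplicity function `k²` of the contracted graph `Γ²`. -/
def k2 (k : V → V → ℕ) : V2 k → V2 k → ℕ := fun c c' =>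
  if c = c' then
    (∑ v ∈ fiber k c, k v v) +
      (∑ u ∈ fiber k c, ∑ v ∈ (fiber k c).erase u,
        if IsBridge k u v then 0 else k u v) / 2
  else ∑ u ∈ fiber k c, ∑ v ∈ fiber k c', k u v

/-- The weight function `w²` of the contracted weighted graph `(Γ²,w²)`. -/
def w2 (k : V → V → ℕ) (w : V → ℕ) : V2 k → ℕ := fun c => ∑ v ∈ fiber k c, w v

/-- The pushforward `α(d)` of a multidegree to the contracted graph. -/
def alphaMap (k : V → V → ℕ) (d : V → ℤ) : V2 k → ℤ := fun c => ∑ v ∈ fiber k c, d v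

/-- The setoid on multidegrees of total degree `D`: two are equivalent if their
difference lies in `Λ`; the quotient is `Δ^d`. -/
def degSetoid (k : V → V → ℕ) (D : ℤ) : Setoid {d : V → ℤ // (∑ v, d v) = D} :=
  ⟨fun a b => (a : V → ℤ) - (b : V → ℤ) ∈ Lambda k, by
    constructor
    · intro a; simpa using (Lambda k).zero_mem
    · intro a b h; have h2 := (Lambda k).neg_mem h; rwa [neg_sub] at h2
    · intro a b c h1 h2
      have h3 := (Lambda k).add_mem h1 h2
      rwa [sub_add_sub_cancel] at h3⟩

/-- Number of edges of the sub-multigraph induced on `A`. -/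
def numEdgesIn (k : V → V → ℕ) (A : Finset V) : ℕ :=
  (∑ v ∈ A, k v v) + (∑ u ∈ A, ∑ v ∈ A.erase u, k u v) / 2

/-- Blow-up of a multigraph at the single bridge `a`–`b`: one exceptional
vertex is inserted in the middle of the bridge. -/
def blowK (k : V → V → ℕ) (a b : V) : (V ⊕ Unit) → (V ⊕ Unit) → ℕ
  | Sum.inl u, Sum.inl v => if (u = a ∧ v = b) ∨ (u = b ∧ v = a) then 0 else k u v
  | Sum.inl u, Sum.inr _ => if u = a ∨ u = b then 1 else 0
  | Sum.inr _, Sum.inl v => if v = a ∨ v = b then 1 else 0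
  | Sum.inr _, Sum.inr _ => 0

/-- Weight function of the blow-up at one bridge: exceptional vertex has weight 0. -/
def blowW (w : V → ℕ) : V ⊕ Unit → ℕ
  | Sum.inl v => w v
  | Sum.inr _ => 0

/-- Blow-up of a multigraph at a set `S` of bridges (given as ordered pairs):
one exceptional vertex is inserted in the middle of each bridge of `S`. -/
def blowKS (k : V → V → ℕ) (S : Finset (V × V)) :
    (V ⊕ {p : V × V // p ∈ S}) → (V ⊕ {p : V × V // p ∈ S}) → ℕ
  | Sum.inl u, Sum.inl v => if (u, v) ∈ S ∨ (v, u) ∈ S then 0 else k u v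
  | Sum.inl u, Sum.inr e => if u = e.1.1 ∨ u = e.1.2 then 1 else 0
  | Sum.inr e, Sum.inl v => if v = e.1.1 ∨ v = e.1.2 then 1 else 0
  | Sum.inr _, Sum.inr _ => 0

/-- Weight function of the blow-up at a set of bridges. -/
def blowWS (w : V → ℕ) (S : Finset (V × V)) : (V ⊕ {p : V × V // p ∈ S}) → ℕ
  | Sum.inl v => w v
  | Sum.inr _ => 0

/-- Strictly balanced multidegree of total degree `D` on the blow-up `Γ̂_S`:
balanced (with degree 1 on each exceptional vertex), and the inequality is
strict for every proper nonempty `A` such that some edge between `A` and its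
complement has no exceptional endpoint. -/
def IsStrictlyBalancedBlowS (k : V → V → ℕ) (w : V → ℕ) (S : Finset (V × V)) (D : ℤ)
    (dh : (V ⊕ {p : V × V // p ∈ S}) → ℤ) : Prop :=
  IsBalanced (blowKS k S) (blowWS w S) D dh ∧
    (∀ e : {p : V × V // p ∈ S}, dh (Sum.inr e) = 1) ∧
    ∀ A : Finset (V ⊕ {p : V × V // p ∈ S}), A ≠ ∅ → A ≠ Finset.univ →
      (∃ u v : V, Sum.inl u ∈ A ∧ Sum.inl v ∉ A ∧ 0 < blowKS k S (Sum.inl u) (Sum.inl v)) →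
      mA (blowKS k S) (blowWS w S) D A < (degA dh A : ℚ)

/-- Multiplicity function of the vine graph: two vertices joined by `δ` edges,
no loops. -/
def vineK (δ : ℕ) : Fin 2 → Fin 2 → ℕ := fun u v => if u = v then 0 else δ

/-- Weight function of the vine graph with weights `g₁, g₂`. -/
def vineW (g1 g2 : ℕ) : Fin 2 → ℕ := fun v => if v = 0 then g1 else g2

/-- The data of a stable vine graph of genus `g` with weights `g₁, g₂` and `δ` edges. -/
def StableVine (g : ℤ) (g1 g2 δ : ℕ) : Prop :=
  2 ≤ δ ∧ ((g1 = 0 ∨ g2 = 0) → 3 ≤ δ) ∧ (g1 : ℤ) + (g2 : ℤ) + (δ : ℤ) - 1 = g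

lemma SimpleGraph.IsAcyclic.sum_degree_add_two {W : Type*} [Fintype W] {G : SimpleGraph W}
    [DecidableRel G.Adj] (hG : G.IsAcyclic) (C : G.ConnectedComponent) {s : Finset W}
    (hs : (s : Set W) = C.supp) :
    ∑ v ∈ s, G.degree v + 2 = 2 * #s := by
  have htree : (G.induce (s : Set W)).IsTree := hs ▸ hG.isTree_connectedComponent C
  have hdeg (v : (s : Set W)) : (G.induce (s : Set W)).degree v = G.degree v := by
    convert SimpleGraph.degree_induce_of_neighborSet_subset (G := G) (v := v) fun w hw => ?_
    have hv : (v : W) ∈ C.supp := hs ▸ v.2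
    exact hs ▸ C.mem_supp_of_adj_mem_supp hv hw
  have hsum := (G.induce (s : Set W)).sum_degrees_eq_twice_card_edges
  simp only [hdeg] at hsum
  have hsum' : ∑ v ∈ s, G.degree v = 2 * #(G.induce (s : Set W)).edgeFinset := by
    rw [← Finset.sum_finset_coe]
    convert hsum
  have hcard := htree.card_edgeFinset
  simp only [SetLike.coe_sort_coe, Fintype.card_coe] at hcard
  omega

/-- Makes the `ℕ`-divisions by `2` in `numEdges` and `k2` exact. -/
lemma Finset.even_sum_sum_erase {α : Type*} [DecidableEq α] {f : α → α → ℕ}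
    (hf : ∀ a b, f a b = f b a) (s : Finset α) :
    Even (∑ a ∈ s, ∑ b ∈ s.erase a, f a b) := by
  induction s using Finset.induction_on with
  | empty => simp
  | @insert x s hx ih =>
    have herase : ∀ a ∈ s, (insert x s).erase a = insert x (s.erase a) := fun a ha =>
      Finset.erase_insert_of_ne (by rintro rfl; exact hx ha)
    have hsplit : ∑ a ∈ s, ∑ b ∈ (insert x s).erase a, f a b
        = ∑ a ∈ s, f x a + ∑ a ∈ s, ∑ b ∈ s.erase a, f a b := by
      rw [← Finset.sum_add_distrib]
      refine Finset.sum_congr rfl fun a ha => ?_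
      rw [herase a ha, Finset.sum_insert fun h => hx (Finset.mem_of_mem_erase h), hf]
    rw [Finset.sum_insert hx, Finset.erase_insert hx, hsplit, ← add_assoc]
    exact Even.add ⟨_, rfl⟩ ih

section Valency

variable {k : V → V → ℕ}

lemma sum_sum_erase_univ_eq_add_deltaA (hsym : ∀ u v, k u v = k v u) (s : Finset V) :
    ∑ v ∈ s, ∑ u ∈ univ.erase v, (k u v : ℤ)
      = ∑ u ∈ s, ∑ v ∈ s.erase u, (k u v : ℤ) + deltaA k s := by
  have hsplit : ∀ v ∈ s, ∑ u ∈ univ.erase v, (k u v : ℤ)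
      = ∑ u ∈ s.erase v, (k v u : ℤ) + ∑ u ∈ sᶜ, (k v u : ℤ) := fun v hv => by
    have h1 := Finset.sum_erase_add univ (fun u => (k v u : ℤ)) (mem_univ v)
    have h2 := Finset.sum_erase_add s (fun u => (k v u : ℤ)) hv
    have h3 := Finset.sum_add_sum_compl s (fun u => (k v u : ℤ))
    simp only [hsym _ v]
    linarith
  rw [Finset.sum_congr rfl hsplit, Finset.sum_add_distrib, deltaA]

lemma wA_eq_sum_add_deltaA (hsym : ∀ u v, k u v = k v u) (w : V → ℕ) (s : Finset V) :
    wA k w s = 2 * ∑ v ∈ s, (w v : ℤ) - 2 * #s + 2 * ∑ v ∈ s, (k v v : ℤ)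
      + ∑ u ∈ s, ∑ v ∈ s.erase u, (k u v : ℤ) + deltaA k s := by
  rw [wA, Finset.sum_add_distrib, sum_sum_erase_univ_eq_add_deltaA hsym]
  simp only [Finset.sum_add_distrib, Finset.sum_sub_distrib, ← Finset.mul_sum, sum_const,
    nsmul_eq_mul]
  ring

lemma wA_univ (hsym : ∀ u v, k u v = k v u) (w : V → ℕ) :
    wA k w univ = 2 * genus k w - 2 := by
  obtain ⟨m, hm⟩ := Finset.even_sum_sum_erase hsym univ
  have hcast : ∑ u, ∑ v ∈ univ.erase u, (k u v : ℤ) = m + m := by exact_mod_cast hm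
  have hhalf : (m + m) / 2 = m := by omega
  rw [wA_eq_sum_add_deltaA hsym, hcast, genus, numEdges, hm, hhalf, deltaA, compl_univ]
  simp only [sum_empty, sum_const_zero, card_univ]
  push_cast
  ring

end Valency

section Bridges

variable {U : Type} [DecidableEq U] {k : U → U → ℕ}

variable (k) in
lemma removeEdge_comm (a b : U) : removeEdge k a b = removeEdge k b a := by
  funext u v
  simp only [removeEdge, or_comm]

lemma IsBridge.symm (hsym : ∀ u v, k u v = k v u) {a b : U} (h : IsBridge k a b) :
    IsBridge k b a :=
  ⟨h.1.symm, hsym b a ▸ h.2.1, removeEdge_comm k a b ▸ h.2.2⟩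

variable (k) in
def bridgeGraph : SimpleGraph U where
  Adj := Relation.SymmGen (IsBridge k)
  symm := ⟨fun _ _ h => h.symm⟩
  loopless := ⟨fun _ h => h.elim (·.1 rfl) (·.1 rfl)⟩

variable (k) in
def toV2 : U → V2 k := Quotient.mk (contractSetoid k)

lemma toV2_eq_iff_reachable {u v : U} : toV2 k u = toV2 k v ↔ (bridgeGraph k).Reachable u v := by
  rw [SimpleGraph.reachable_iff_reflTransGen]
  change _ ↔ Relation.ReflTransGen (Relation.SymmGen (IsBridge k)) u v
  rw [Relation.EqvGen.reflTransGen_symmGen]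
  exact Quotient.eq

lemma toV2_eq_of_bridgeGraph_adj {u v : U} (h : (bridgeGraph k).Adj u v) : toV2 k u = toV2 k v :=
  toV2_eq_iff_reachable.2 h.reachable

lemma bridgeGraph_deleteEdges_le (a b : U) :
    (bridgeGraph k).deleteEdges {s(a, b)} ≤ graphOf (removeEdge k a b) := by
  intro x y hxy
  obtain ⟨hxy, hne⟩ := SimpleGraph.deleteEdges_adj.1 hxy
  have hkeep : ¬ ((x = a ∧ y = b) ∨ (x = b ∧ y = a)) := by
    rintro (⟨rfl, rfl⟩ | ⟨rfl, rfl⟩)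
    exacts [hne rfl, hne Sym2.eq_swap]
  have hkeep' : ¬ ((y = a ∧ x = b) ∨ (y = b ∧ x = a)) := by tauto
  simp only [graphOf, removeEdge, if_neg hkeep, if_neg hkeep']
  rcases hxy with h | h
  · exact ⟨h.1, Or.inl (h.2.1 ▸ Nat.one_pos)⟩
  · exact ⟨h.1.symm, Or.inr (h.2.1 ▸ Nat.one_pos)⟩

lemma connected_removeEdge (hconn : (graphOf k).Connected) {a b : U}
    (hab : (graphOf (removeEdge k a b)).Reachable a b) :
    (graphOf (removeEdge k a b)).Connected := by
  have hadj : ∀ x y, (graphOf k).Adj x y → (graphOf (removeEdge k a b)).Reachable x y := by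
    rintro x y ⟨hxy, hpos⟩
    by_cases hxy' : (x = a ∧ y = b) ∨ (x = b ∧ y = a)
    · rcases hxy' with ⟨rfl, rfl⟩ | ⟨rfl, rfl⟩
      exacts [hab, hab.symm]
    · refine SimpleGraph.Adj.reachable ⟨hxy, ?_⟩
      have hyx : ¬ ((y = a ∧ x = b) ∨ (y = b ∧ x = a)) := by tauto
      simpa only [removeEdge, if_neg hxy', if_neg hyx] using hpos
  have := hconn.nonempty
  refine ⟨fun x y => ?_⟩
  simp only [SimpleGraph.reachable_iff_reflTransGen] at hadj ⊢
  exact ((SimpleGraph.reachable_iff_reflTransGen x y).1 (hconn.preconnected x y)).lift' id hadj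

lemma bridgeGraph_isAcyclic (hconn : (graphOf k).Connected) : (bridgeGraph k).IsAcyclic := by
  refine SimpleGraph.isAcyclic_iff_forall_adj_isBridge.2 fun a b hab => ?_
  rw [SimpleGraph.isBridge_iff]
  intro hre
  rcases hab with h | h
  · exact h.2.2 (connected_removeEdge hconn (hre.mono (bridgeGraph_deleteEdges_le a b)))
  · rw [Sym2.eq_swap] at hre
    exact h.2.2 (connected_removeEdge hconn (hre.symm.mono (bridgeGraph_deleteEdges_le b a)))

end Bridges

section Fibers

variable {k : V → V → ℕ}

variable (k) in
def classPreimage (A : Finset (V2 k)) : Finset V :=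
  univ.filter fun v => toV2 k v ∈ A

lemma mem_fiber {c : V2 k} {v : V} : v ∈ fiber k c ↔ toV2 k v = c := by
  simp only [fiber, Finset.mem_filter, Finset.mem_univ, true_and]
  rfl

lemma mem_classPreimage {A : Finset (V2 k)} {v : V} :
    v ∈ classPreimage k A ↔ toV2 k v ∈ A := by
  simp [classPreimage]

lemma classPreimage_compl (A : Finset (V2 k)) : classPreimage k Aᶜ = (classPreimage k A)ᶜ := by
  ext v
  simp [mem_classPreimage]

lemma classPreimage_univ : classPreimage k univ = univ := by
  ext v
  simp [mem_classPreimage]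

lemma classPreimage_singleton (c : V2 k) : classPreimage k {c} = fiber k c := by
  ext v
  simp [mem_classPreimage, mem_fiber]

lemma sum_sum_fiber {M : Type*} [AddCommMonoid M] (A : Finset (V2 k)) (f : V → M) :
    ∑ c ∈ A, ∑ v ∈ fiber k c, f v = ∑ v ∈ classPreimage k A, f v := by
  rw [classPreimage, ← Finset.sum_fiberwise_eq_sum_filter univ A (toV2 k) f]
  refine Finset.sum_congr rfl fun c _ => Finset.sum_congr ?_ fun _ _ => rfl
  ext v
  simp [mem_fiber]

lemma coe_fiber_toV2 (v : V) :
    (fiber k (toV2 k v) : Set V) = ((bridgeGraph k).connectedComponentMk v).supp := by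
  ext u
  simp only [Finset.mem_coe, mem_fiber, SimpleGraph.ConnectedComponent.mem_supp_iff,
    SimpleGraph.ConnectedComponent.eq]
  exact toV2_eq_iff_reachable

lemma sum_degree_fiber_add_two (hconn : (graphOf k).Connected) (c : V2 k) :
    ∑ v ∈ fiber k c, (bridgeGraph k).degree v + 2 = 2 * #(fiber k c) := by
  obtain ⟨v, rfl⟩ : ∃ v, toV2 k v = c := Quotient.mk_surjective c
  exact (bridgeGraph_isAcyclic hconn).sum_degree_add_two _ (coe_fiber_toV2 v)

lemma sum_erase_fiber_ite_isBridge_eq_degree (hsym : ∀ u v, k u v = k v u) {c : V2 k} {u : V}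
    (hu : u ∈ fiber k c) :
    ∑ v ∈ (fiber k c).erase u, (if IsBridge k u v then (k u v : ℤ) else 0)
      = (bridgeGraph k).degree u := by
  have hterm : ∀ v, (if IsBridge k u v then (k u v : ℤ) else 0)
      = if (bridgeGraph k).Adj u v then 1 else 0 := fun v => by
    by_cases hb : IsBridge k u v
    · rw [if_pos hb, if_pos (show (bridgeGraph k).Adj u v from Or.inl hb), hb.2.1, Nat.cast_one]
    · rw [if_neg hb, if_neg fun h => hb (h.elim id (IsBridge.symm hsym))]
  have hnbr : ∀ v ∉ (fiber k c).erase u, ¬ (bridgeGraph k).Adj u v := fun v hv h =>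
    hv (Finset.mem_erase.2 ⟨h.ne', mem_fiber.2 ((toV2_eq_of_bridgeGraph_adj h).symm.trans
      (mem_fiber.1 hu))⟩)
  rw [Finset.sum_congr rfl fun v _ => hterm v,
    Finset.sum_subset (subset_univ _) fun v _ hv => if_neg (hnbr v hv), Finset.sum_boole,
    ← SimpleGraph.card_neighborFinset_eq_degree, SimpleGraph.neighborFinset_eq_filter]

end Fibers

section ContractedGraph

variable {k : V → V → ℕ}

lemma k2_of_ne {c c' : V2 k} (h : c ≠ c') :
    k2 k c c' = ∑ u ∈ fiber k c, ∑ v ∈ fiber k c', k u v :=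
  if_neg h

lemma k2_symm (hsym : ∀ u v, k u v = k v u) (c c' : V2 k) : k2 k c c' = k2 k c' c := by
  rcases eq_or_ne c c' with rfl | h
  · rfl
  · rw [k2_of_ne h, k2_of_ne h.symm, Finset.sum_comm]
    simp only [hsym]

lemma two_mul_k2_self (hsym : ∀ u v, k u v = k v u) (c : V2 k) :
    2 * (k2 k c c : ℤ) = 2 * ∑ v ∈ fiber k c, (k v v : ℤ)
      + ∑ u ∈ fiber k c, ∑ v ∈ (fiber k c).erase u,
          if IsBridge k u v then 0 else (k u v : ℤ) := by
  have hsym' : ∀ u v,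
      (if IsBridge k u v then 0 else k u v) = if IsBridge k v u then 0 else k v u := fun u v => by
    rw [hsym u v]
    exact if_congr ⟨IsBridge.symm hsym, IsBridge.symm hsym⟩ rfl rfl
  obtain ⟨m, hm⟩ := Finset.even_sum_sum_erase hsym' (fiber k c)
  have hhalf : (m + m) / 2 = m := by omega
  have hcast : ∑ u ∈ fiber k c, ∑ v ∈ (fiber k c).erase u,
      (if IsBridge k u v then 0 else (k u v : ℤ)) = m + m := by
    exact_mod_cast hm
  rw [k2, if_pos rfl, hm, hhalf, hcast]
  push_cast
  ring

lemma sum_sum_erase_fiber_eq (hsym : ∀ u v, k u v = k v u) (hconn : (graphOf k).Connected)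
    (c : V2 k) :
    ∑ u ∈ fiber k c, ∑ v ∈ (fiber k c).erase u, (k u v : ℤ)
      = 2 * #(fiber k c) - 2
        + ∑ u ∈ fiber k c, ∑ v ∈ (fiber k c).erase u,
            if IsBridge k u v then 0 else (k u v : ℤ) := by
  have hbridges : ∑ u ∈ fiber k c, ∑ v ∈ (fiber k c).erase u,
      (if IsBridge k u v then (k u v : ℤ) else 0) = 2 * #(fiber k c) - 2 := by
    rw [Finset.sum_congr rfl fun u hu => sum_erase_fiber_ite_isBridge_eq_degree hsym hu]
    have := sum_degree_fiber_add_two hconn c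
    push_cast [← Nat.cast_sum]
    omega
  rw [← hbridges, ← Finset.sum_add_distrib]
  refine Finset.sum_congr rfl fun u _ => ?_
  rw [← Finset.sum_add_distrib]
  refine Finset.sum_congr rfl fun v _ => ?_
  split_ifs <;> simp

lemma deltaA_k2 (A : Finset (V2 k)) : deltaA (k2 k) A = deltaA k (classPreimage k A) := by
  have hcross : ∀ c ∈ A, ∑ c' ∈ Aᶜ, (k2 k c c' : ℤ)
      = ∑ u ∈ fiber k c, ∑ c' ∈ Aᶜ, ∑ v ∈ fiber k c', (k u v : ℤ) := fun c hc => by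
    rw [Finset.sum_comm]
    refine Finset.sum_congr rfl fun c' hc' => ?_
    rw [k2_of_ne (by rintro rfl; exact Finset.mem_compl.1 hc' hc)]
    push_cast
    rfl
  rw [deltaA, Finset.sum_congr rfl hcross, sum_sum_fiber, deltaA, ← classPreimage_compl]
  exact Finset.sum_congr rfl fun u _ => sum_sum_fiber _ _

lemma wA_k2_singleton (hsym : ∀ u v, k u v = k v u) (hconn : (graphOf k).Connected)
    (w : V → ℕ) (c : V2 k) : wA (k2 k) (w2 k w) {c} = wA k w (fiber k c) := by
  rw [wA_eq_sum_add_deltaA (k2_symm hsym), wA_eq_sum_add_deltaA hsym, deltaA_k2,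
    classPreimage_singleton, sum_sum_erase_fiber_eq hsym hconn]
  have := two_mul_k2_self hsym c
  simp only [w2, Finset.sum_singleton, Finset.erase_singleton, Finset.sum_empty,
    Finset.card_singleton, Nat.cast_sum, Nat.cast_one]
  linarith

lemma wA_k2 (hsym : ∀ u v, k u v = k v u) (hconn : (graphOf k).Connected)
    (w : V → ℕ) (A : Finset (V2 k)) : wA (k2 k) (w2 k w) A = wA k w (classPreimage k A) := by
  calc wA (k2 k) (w2 k w) A = ∑ c ∈ A, wA (k2 k) (w2 k w) {c} := by
        simp only [wA, Finset.sum_singleton]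
    _ = ∑ c ∈ A, wA k w (fiber k c) :=
        Finset.sum_congr rfl fun c _ => wA_k2_singleton hsym hconn w c
    _ = wA k w (classPreimage k A) := sum_sum_fiber A _

lemma genus_k2 (hsym : ∀ u v, k u v = k v u) (hconn : (graphOf k).Connected) (w : V → ℕ) :
    genus (k2 k) (w2 k w) = genus k w := by
  have := wA_k2 hsym hconn w univ
  rw [classPreimage_univ, wA_univ (k2_symm hsym), wA_univ hsym] at this
  omega

lemma mA_k2 (hsym : ∀ u v, k u v = k v u) (hconn : (graphOf k).Connected) (w : V → ℕ)
    (D : ℤ) (A : Finset (V2 k)) : mA (k2 k) (w2 k w) D A = mA k w D (classPreimage k A) := by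
  rw [mA, mA, genus_k2 hsym hconn, wA_k2 hsym hconn, deltaA_k2]

lemma degA_alphaMap (d : V → ℤ) (A : Finset (V2 k)) :
    degA (alphaMap k d) A = degA d (classPreimage k A) :=
  sum_sum_fiber A d

end ContractedGraph

theorem stmt8_general (V : Type) [Fintype V] [DecidableEq V] (k : V → V → ℕ) (w : V → ℕ)
    (hsym : ∀ u v, k u v = k v u) (hstab : IsStable k w)
    (D : ℤ) (d : V → ℤ) (hbal : IsBalanced k w D d) :
    IsBalanced (k2 k) (w2 k w) D (alphaMap k d) := by
  refine ⟨?_, fun A => ?_⟩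
  · rw [degA_alphaMap, classPreimage_univ]
    exact hbal.1
  · rw [mA_k2 hsym hstab.1, degA_alphaMap]
    exact hbal.2 _

/-- The pushforward `α(d)` of a balanced multidegree of total
degree `D` on `(Γ,w)` is a balanced multidegree of total degree `D` on the
contracted weighted graph `(Γ²,w²)`. -/
theorem stmt8 (V : Type) [Fintype V] [DecidableEq V] (k : V → V → ℕ) (w : V → ℕ)
    (hsym : ∀ u v, k u v = k v u) (hstab : IsStable k w) (hg : 2 ≤ genus k w)
    (D : ℤ) (d : V → ℤ) (hbal : IsBalanced k w D d) :
    IsBalanced (k2 k) (w2 k w) D (alphaMap k d) :=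
  stmt8_general V k w hsym hstab D d hbal
end
end

section
/- Let (Γ,w) be a stable weighted graph of genus g ≥ 2. (i) For every connected subset A ⊆ V one has m_A(g−1) = g_A − 1, where g_A = Σ_{v∈A} w(v) + b₁(Γ_A) and Γ_A is the induced sub-multigraph on A; in particular m_A(g−1) is an integer. (ii) If Γ has at least two vertices, then (Γ,w) is (g−1)-special: there exists a balanced multidegree of total degree g−1 that is not strictly balanced. -/
open Finset

noncomputable section
open scoped Classical

variable {V : Type} [Fintype V] [DecidableEq V]

/-!
For `D = g - 1` the factor `D / (2g - 2)` in `m_A(D)` is `1/2`, and counting edge ends gives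
`w_A - δ_A = 2 (Σ_{v∈A} w(v) + #E(Γ_A) - #A)`; this is (i).

For (ii), order the vertices and put `d(v) = w(v) - 1 + k(v,v) + Σ_{u<v} k(u,v)`, so that every
non-loop edge is charged to its larger endpoint. Then `d_A - m_A(g-1)` is the number of edges
from `A` down to a smaller vertex outside `A`: it is nonnegative, zero for `A = V`, and zero for
`A = V ∖ {max V}`.
-/

section MultidegreeOfGenusMinusOne

variable {V : Type} [DecidableEq V]

lemma sum_sum_erase_eq_two_nsmul [LinearOrder V] {M : Type*} [AddCommMonoid M]
    (f : V → V → M) (hf : ∀ u v, f u v = f v u) (A : Finset V) :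
    ∑ u ∈ A, ∑ v ∈ A.erase u, f u v = 2 • ∑ u ∈ A, ∑ v ∈ A with u < v, f u v := by
  have hswap : ∑ u ∈ A, ∑ v ∈ A with v < u, f u v = ∑ u ∈ A, ∑ v ∈ A with u < v, f u v := by
    rw [sum_comm' (t' := A) (s' := fun v => A.filter (v < ·))
      (by intro u v; simp only [mem_filter]; tauto)]
    exact sum_congr rfl fun v _ => sum_congr rfl fun u _ => hf u v
  rw [two_nsmul]
  nth_rw 1 [← hswap]
  rw [← sum_add_distrib]
  refine sum_congr rfl fun u _ => ?_
  rw [← sum_union (disjoint_filter.2 fun v _ h h' => lt_asymm h h'), ← filter_or, ← filter_ne']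
  simp only [ne_iff_lt_or_gt]

lemma numEdgesIn_eq [LinearOrder V] {k : V → V → ℕ} (hsym : ∀ u v, k u v = k v u)
    (A : Finset V) :
    numEdgesIn k A = ∑ v ∈ A, k v v + ∑ u ∈ A, ∑ v ∈ A with u < v, k u v := by
  rw [numEdgesIn, sum_sum_erase_eq_two_nsmul k hsym, smul_eq_mul,
    Nat.mul_div_cancel_left _ two_pos]

variable [Fintype V]

lemma wA_sub_deltaA {k : V → V → ℕ} (w : V → ℕ) (hsym : ∀ u v, k u v = k v u)
    (A : Finset V) :
    wA k w A - deltaA k A = 2 * (∑ v ∈ A, (w v : ℤ) + numEdgesIn k A - A.card) := by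
  let _ : LinearOrder V := LinearOrder.lift' _ (Fintype.equivFin V).injective
  have hsplit : ∀ v ∈ A, ∑ u ∈ univ.erase v, (k u v : ℤ) =
      ∑ u ∈ A.erase v, (k v u : ℤ) + ∑ u ∈ Aᶜ, (k v u : ℤ) := by
    intro v hv
    simp only [hsym _ v]
    rw [sum_erase_eq_sub (mem_univ v), sum_erase_eq_sub hv, ← sum_add_sum_compl A]
    ring
  have hinner : ∑ u ∈ A, ∑ v ∈ A.erase u, (k u v : ℤ) =
      2 * ∑ u ∈ A, ∑ v ∈ A with u < v, (k u v : ℤ) := by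
    rw [sum_sum_erase_eq_two_nsmul _ (fun u v => by rw [hsym]), two_nsmul, two_mul]
  rw [wA, sum_congr rfl fun v hv => by rw [hsplit v hv], deltaA, numEdgesIn_eq hsym]
  simp only [sum_add_distrib, sum_sub_distrib, sum_const, nsmul_eq_mul, ← mul_sum, hinner]
  push_cast
  ring

lemma mA_genus_sub_one {k : V → V → ℕ} {w : V → ℕ} (hsym : ∀ u v, k u v = k v u)
    (hg : genus k w ≠ 1) (A : Finset V) :
    mA k w (genus k w - 1) A = ((∑ v ∈ A, (w v : ℤ) + numEdgesIn k A - A.card : ℤ) : ℚ) := by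
  have hg' : (genus k w : ℚ) - 1 ≠ 0 := sub_ne_zero.2 (by exact_mod_cast hg)
  have key : ((wA k w A - deltaA k A : ℤ) : ℚ) = _ := congrArg (Int.cast (R := ℚ))
    (wA_sub_deltaA w hsym A)
  rw [mA]
  push_cast at key ⊢
  field_simp
  linear_combination key

def orientedMultidegree [LinearOrder V] (k : V → V → ℕ) (w : V → ℕ) (v : V) : ℤ :=
  w v - 1 + k v v + ∑ u with u < v, (k u v : ℤ)

lemma degA_orientedMultidegree [LinearOrder V] {k : V → V → ℕ} (w : V → ℕ)
    (hsym : ∀ u v, k u v = k v u) (A : Finset V) :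
    degA (orientedMultidegree k w) A = ∑ v ∈ A, (w v : ℤ) + numEdgesIn k A - A.card +
      ∑ v ∈ A, ∑ u ∈ Aᶜ with u < v, (k u v : ℤ) := by
  have hsplit : ∀ v, ∑ u with u < v, (k u v : ℤ) =
      ∑ u ∈ A with u < v, (k u v : ℤ) + ∑ u ∈ Aᶜ with u < v, (k u v : ℤ) := by
    intro v
    rw [sum_filter, sum_filter, sum_filter, sum_add_sum_compl]
  have hinner : ∑ v ∈ A, ∑ u ∈ A with u < v, (k u v : ℤ) =
      ∑ u ∈ A, ∑ v ∈ A with u < v, (k u v : ℤ) :=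
    sum_comm' (by intro v u; simp only [mem_filter]; tauto)
  simp only [degA, orientedMultidegree, hsplit, sum_add_distrib, sum_sub_distrib, sum_const,
    nsmul_eq_mul, mul_one, hinner, numEdgesIn_eq hsym]
  push_cast
  ring

lemma isBalanced_orientedMultidegree [LinearOrder V] {k : V → V → ℕ} {w : V → ℕ}
    (hsym : ∀ u v, k u v = k v u) (hg : genus k w ≠ 1) :
    IsBalanced k w (genus k w - 1) (orientedMultidegree k w) := by
  refine ⟨?_, fun A => ?_⟩
  · rw [degA_orientedMultidegree w hsym, compl_univ, genus, card_univ]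
    simp only [filter_empty, sum_empty, sum_const_zero, add_zero]
    rw [show numEdgesIn k univ = numEdges k from rfl]
    ring
  · rw [mA_genus_sub_one hsym hg, degA_orientedMultidegree w hsym]
    have : 0 ≤ ∑ v ∈ A, ∑ u ∈ Aᶜ with u < v, (k u v : ℤ) := by positivity
    exact_mod_cast le_add_of_nonneg_right this

lemma not_isStrictlyBalanced_orientedMultidegree [LinearOrder V] {k : V → V → ℕ} {w : V → ℕ}
    (hsym : ∀ u v, k u v = k v u) (hg : genus k w ≠ 1) (hcard : 2 ≤ Fintype.card V) :
    ¬ IsStrictlyBalanced k w (genus k w - 1) (orientedMultidegree k w) := by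
  have : Nonempty V := Fintype.card_pos_iff.mp (by omega : 0 < Fintype.card V)
  rintro ⟨-, hstrict⟩
  obtain ⟨M, hM⟩ := exists_max_image (univ : Finset V) id univ_nonempty
  set A := univ.erase M
  have hA : A.Nonempty := by
    rw [← card_pos, card_erase_of_mem (mem_univ M), card_univ]
    omega
  have hA' : A ≠ univ := (erase_ssubset (mem_univ M)).ne
  have hcross : ∑ v ∈ A, ∑ u ∈ Aᶜ with u < v, (k u v : ℤ) = 0 := by
    refine sum_eq_zero fun v _ => sum_eq_zero fun u hu => ?_
    simp only [A, mem_filter, mem_compl, mem_erase, mem_univ, and_true, not_not] at hu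
    exact absurd (hM.2 v (mem_univ v)) (hu.1 ▸ hu.2).not_ge
  have := hstrict A hA.ne_empty hA'
  rw [mA_genus_sub_one hsym hg, degA_orientedMultidegree w hsym, hcross, add_zero] at this
  exact lt_irrefl _ this

end MultidegreeOfGenusMinusOne

theorem stmt12_general (V : Type) [Fintype V] [DecidableEq V] (k : V → V → ℕ) (w : V → ℕ)
    (hsym : ∀ u v, k u v = k v u) (hg : 2 ≤ genus k w) :
    (∀ A : Finset V, IsConnectedSubset k A →
      mA k w (genus k w - 1) A =
        (((∑ v ∈ A, (w v : ℤ)) + ((numEdgesIn k A : ℤ) - (A.card : ℤ) + 1) - 1 : ℤ) : ℚ)) ∧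
    (2 ≤ Fintype.card V →
      ∃ d : V → ℤ, IsBalanced k w (genus k w - 1) d ∧
        ¬ IsStrictlyBalanced k w (genus k w - 1) d) := by
  have hg1 : genus k w ≠ 1 := by omega
  refine ⟨fun A _ => by rw [mA_genus_sub_one hsym hg1]; ring_nf, fun hcard => ?_⟩
  let _ : LinearOrder V := LinearOrder.lift' _ (Fintype.equivFin V).injective
  exact ⟨orientedMultidegree k w, isBalanced_orientedMultidegree hsym hg1,
    not_isStrictlyBalanced_orientedMultidegree hsym hg1 hcard⟩

/-- (i) for every connected `A ⊆ V`, `m_A(g−1) = g_A − 1` where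
`g_A = Σ_{v∈A} w(v) + b₁(Γ_A)`; (ii) if `Γ` has at least two vertices then
`(Γ,w)` is `(g−1)`-special. -/
theorem stmt12 (V : Type) [Fintype V] [DecidableEq V] (k : V → V → ℕ) (w : V → ℕ)
    (hsym : ∀ u v, k u v = k v u) (hstab : IsStable k w) (hg : 2 ≤ genus k w) :
    (∀ A : Finset V, IsConnectedSubset k A →
      mA k w (genus k w - 1) A =
        (((∑ v ∈ A, (w v : ℤ)) + ((numEdgesIn k A : ℤ) - (A.card : ℤ) + 1) - 1 : ℤ) : ℚ)) ∧
    (2 ≤ Fintype.card V →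
      ∃ d : V → ℤ, IsBalanced k w (genus k w - 1) d ∧
        ¬ IsStrictlyBalanced k w (genus k w - 1) d) :=
  stmt12_general V k w hsym hg

end
end

section
/- Fix an integer g ≥ 2 and an integer d. Then gcd(d−g+1, 2g−2) = 1 if and only if no stable vine graph of genus g is d-special. Moreover, if some stable vine graph of genus g is d-special, then there exists a d-special stable vine graph of genus g with δ = 2 or δ = 3 edges. -/
open Finset

noncomputable section
open scoped Classical

variable {V : Type} [Fintype V] [DecidableEq V]

/-!
On a vine graph the only proper nonempty sets of vertices are the two vertices, and
`m_{v₁}(d) + m_{v₂}(d) = d - δ`. So a balanced multidegree `(a, d - a)` is an integer `a` in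
`[m_{v₁}(d), m_{v₁}(d) + δ]`, and the vine is `d`-special exactly when `m_{v₁}(d)` is an
integer, i.e. when `2g - 2 ∣ (d - g + 1) w_{v₁}` with `w_{v₁} = 2g₁ + δ - 2`. Stability gives
`0 < w_{v₁} < 2g - 2`, which rules this out when `d - g + 1` is prime to `2g - 2`. Otherwise
`n = (2g - 2) / gcd ≤ g - 1` satisfies `2g - 2 ∣ (d - g + 1) n`, and each `1 ≤ n ≤ g - 1` is
`w_{v₁}` for a stable vine with `δ = 2` (`n` even) or `δ = 3` (`n` odd).
-/

lemma Fin.two_finset_cases (A : Finset (Fin 2)) :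
    A = ∅ ∨ A = {0} ∨ A = {1} ∨ A = univ := by
  revert A; decide

lemma Fin.univ_two_erase_zero : (univ : Finset (Fin 2)).erase 0 = {1} := by decide

lemma Fin.univ_two_erase_one : (univ : Finset (Fin 2)).erase 1 = {0} := by decide

lemma Int.exists_intCast_eq_div_iff_dvd {q N : ℤ} (hN : N ≠ 0) :
    (∃ n : ℤ, (q : ℚ) / N = n) ↔ N ∣ q := by
  have hNQ : (N : ℚ) ≠ 0 := by exact_mod_cast hN
  constructor
  · rintro ⟨n, hn⟩
    refine ⟨n, ?_⟩
    rw [div_eq_iff hNQ] at hn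
    exact_mod_cast hn.trans (mul_comm _ _)
  · rintro ⟨c, rfl⟩
    exact ⟨c, by push_cast; field_simp⟩

lemma Int.not_dvd_mul_of_gcd_eq_one {e N n : ℤ} (h : Int.gcd e N = 1) (hn : 0 < n)
    (hnN : n < N) : ¬ N ∣ e * n := fun hdvd =>
  hnN.not_ge <| Int.le_of_dvd hn <|
    Int.dvd_of_dvd_mul_right_of_gcd_one hdvd (by rwa [Int.gcd_comm])

lemma Int.exists_dvd_mul_of_gcd_ne_one {e N : ℤ} (hN : 0 < N) (h : Int.gcd e N ≠ 1) :
    ∃ n, 0 < n ∧ 2 * n ≤ N ∧ N ∣ e * n := by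
  have hm : 2 ≤ Int.gcd e N := by
    have : Int.gcd e N ≠ 0 := fun h0 => hN.ne' (Int.gcd_eq_zero_iff.1 h0).2
    omega
  obtain ⟨n, hn⟩ := Int.gcd_dvd_right e N
  obtain ⟨e', he'⟩ := Int.gcd_dvd_left e N
  have hn0 : 0 < n := by
    by_contra! hn0
    nlinarith
  refine ⟨n, hn0, by nlinarith, e', ?_⟩
  rw [hn]
  nth_rw 1 [he']
  ring

lemma mA_empty (k : V → V → ℕ) (w : V → ℕ) (D : ℤ) : mA k w D ∅ = 0 := by
  simp [mA, wA, deltaA]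

section Vine

variable (g1 g2 δ : ℕ)

lemma numEdges_vine : numEdges (vineK δ) = δ := by
  simp [numEdges, vineK, Fin.univ_two_erase_zero, Fin.univ_two_erase_one, ← two_mul]

lemma genus_vine : genus (vineK δ) (vineW g1 g2) = (g1 : ℤ) + g2 + δ - 1 := by
  rw [genus, numEdges_vine, Fin.sum_univ_two, Fintype.card_fin]
  simp only [vineW, if_pos, if_neg one_ne_zero]
  ring

lemma wA_vine_zero : wA (vineK δ) (vineW g1 g2) {0} = 2 * (g1 : ℤ) + δ - 2 := by
  simp [wA, vineK, vineW, sub_add_eq_add_sub]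

lemma wA_vine_one : wA (vineK δ) (vineW g1 g2) {1} = 2 * (g2 : ℤ) + δ - 2 := by
  simp [wA, vineK, vineW, sub_add_eq_add_sub]

lemma wA_vine_univ :
    wA (vineK δ) (vineW g1 g2) univ = 2 * genus (vineK δ) (vineW g1 g2) - 2 := by
  have hsplit : wA (vineK δ) (vineW g1 g2) univ =
      wA (vineK δ) (vineW g1 g2) {0} + wA (vineK δ) (vineW g1 g2) {1} := by
    simp [wA, Fin.sum_univ_two]
  rw [hsplit, wA_vine_zero, wA_vine_one, genus_vine]
  ring

lemma deltaA_vine_zero : deltaA (vineK δ) {0} = δ := by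
  simp [deltaA, vineK, Finset.compl_singleton, Fin.univ_two_erase_zero]

lemma deltaA_vine_one : deltaA (vineK δ) {1} = δ := by
  simp [deltaA, vineK, Finset.compl_singleton, Fin.univ_two_erase_one]

variable {g1 g2 δ} (D : ℤ)

lemma mA_vine_univ (hg : genus (vineK δ) (vineW g1 g2) ≠ 1) :
    mA (vineK δ) (vineW g1 g2) D univ = D := by
  have hN : 2 * (genus (vineK δ) (vineW g1 g2) : ℚ) - 2 ≠ 0 := by
    norm_cast
    omega
  simp [mA, wA_vine_univ, deltaA, hN]

lemma mA_vine_zero_add_mA_vine_one (hg : genus (vineK δ) (vineW g1 g2) ≠ 1) :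
    mA (vineK δ) (vineW g1 g2) D {0} + mA (vineK δ) (vineW g1 g2) D {1} = D - δ := by
  rw [genus_vine] at hg
  have hN : (g1 : ℚ) + g2 + δ - 2 ≠ 0 := by
    exact_mod_cast (by omega : (g1 : ℤ) + g2 + δ - 2 ≠ 0)
  simp only [mA, wA_vine_zero, wA_vine_one, deltaA_vine_zero, deltaA_vine_one, genus_vine]
  push_cast
  rw [show 2 * ((g1 : ℚ) + g2 + δ - 1) - 2 = 2 * (g1 + g2 + δ - 2) by ring]
  field_simp
  ring

lemma isBalanced_vine_iff (hg : genus (vineK δ) (vineW g1 g2) ≠ 1) (x : Fin 2 → ℤ) :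
    IsBalanced (vineK δ) (vineW g1 g2) D x ↔
      x 0 + x 1 = D ∧ mA (vineK δ) (vineW g1 g2) D {0} ≤ x 0 ∧
        mA (vineK δ) (vineW g1 g2) D {1} ≤ x 1 := by
  have hdeg : degA x univ = x 0 + x 1 := Fin.sum_univ_two x
  refine ⟨fun ⟨hsum, hA⟩ => ⟨hdeg ▸ hsum, by simpa [degA] using hA {0},
    by simpa [degA] using hA {1}⟩, fun ⟨hsum, h0, h1⟩ => ⟨hdeg ▸ hsum, fun A => ?_⟩⟩
  rcases Fin.two_finset_cases A with rfl | rfl | rfl | rfl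
  · simp [mA_empty, degA]
  · simpa [degA] using h0
  · simpa [degA] using h1
  · rw [mA_vine_univ D hg, hdeg, hsum]

lemma not_isDGeneral_vine_iff (hg : genus (vineK δ) (vineW g1 g2) ≠ 1) :
    ¬ IsDGeneral (vineK δ) (vineW g1 g2) D ↔
      ∃ n : ℤ, mA (vineK δ) (vineW g1 g2) D {0} = n := by
  have hsum := mA_vine_zero_add_mA_vine_one D hg
  constructor
  · intro hspecial
    obtain ⟨x, hbal, hnot⟩ : ∃ x, IsBalanced (vineK δ) (vineW g1 g2) D x ∧
        ¬ IsStrictlyBalanced (vineK δ) (vineW g1 g2) D x := by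
      simpa [IsDGeneral] using hspecial
    obtain ⟨-, h0, h1⟩ := (isBalanced_vine_iff D hg x).1 hbal
    obtain ⟨A, hA, hA', htight⟩ : ∃ A : Finset (Fin 2), A ≠ ∅ ∧ A ≠ univ ∧
        (degA x A : ℚ) ≤ mA (vineK δ) (vineW g1 g2) D A := by
      simpa [IsStrictlyBalanced, hbal] using hnot
    rcases Fin.two_finset_cases A with rfl | rfl | rfl | rfl
    · exact absurd rfl hA
    · exact ⟨x 0, le_antisymm h0 (by simpa [degA] using htight)⟩
    · have h1' : mA (vineK δ) (vineW g1 g2) D {1} = x 1 :=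
        le_antisymm h1 (by simpa [degA] using htight)
      exact ⟨D - δ - x 1, by push_cast; linarith⟩
    · exact absurd rfl hA'
  · rintro ⟨n, hn⟩ hgeneral
    have hbal : IsBalanced (vineK δ) (vineW g1 g2) D ![n, D - n] := by
      refine (isBalanced_vine_iff D hg _).2 ⟨by simp, by simp [hn], ?_⟩
      simp only [Matrix.cons_val_one, Matrix.cons_val_zero]
      push_cast
      linarith [(Nat.cast_nonneg δ : (0 : ℚ) ≤ δ)]
    have := (hgeneral _ hbal).2 {0} (by decide) (by decide)
    simp [degA, hn] at this

lemma mA_vine_zero_eq {g : ℤ} (hg : (g1 : ℤ) + g2 + δ - 1 = g) (hg1 : g ≠ 1) :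
    mA (vineK δ) (vineW g1 g2) D {0} =
      (((D - g + 1) * (2 * g1 + δ - 2) : ℤ) : ℚ) / ((2 * g - 2 : ℤ) : ℚ) + g1 - 1 := by
  subst hg
  have hN : (g1 : ℚ) + g2 + δ - 2 ≠ 0 := by
    exact_mod_cast (by omega : (g1 : ℤ) + g2 + δ - 2 ≠ 0)
  rw [mA, wA_vine_zero, deltaA_vine_zero, genus_vine]
  push_cast
  rw [show 2 * ((g1 : ℚ) + g2 + δ - 1) - 2 = 2 * (g1 + g2 + δ - 2) by ring]
  field_simp
  ring

lemma not_isDGeneral_vine_iff_dvd {g : ℤ} (hg : (g1 : ℤ) + g2 + δ - 1 = g) (hg1 : g ≠ 1) :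
    ¬ IsDGeneral (vineK δ) (vineW g1 g2) D ↔ 2 * g - 2 ∣ (D - g + 1) * (2 * g1 + δ - 2) := by
  rw [not_isDGeneral_vine_iff D (by rwa [genus_vine, hg]), mA_vine_zero_eq D hg hg1,
    ← Int.exists_intCast_eq_div_iff_dvd (by omega)]
  constructor
  · rintro ⟨n, hn⟩
    exact ⟨n - (g1 - 1), by push_cast at hn ⊢; linarith⟩
  · rintro ⟨n, hn⟩
    exact ⟨n + (g1 - 1), by push_cast at hn ⊢; linarith⟩

end Vine

lemma StableVine.weight_pos_lt {g : ℤ} {g1 g2 δ : ℕ} (h : StableVine g g1 g2 δ) :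
    0 < 2 * (g1 : ℤ) + δ - 2 ∧ 2 * (g1 : ℤ) + δ - 2 < 2 * g - 2 := by
  obtain ⟨hδ, hst, hg⟩ := h
  omega

lemma exists_stableVine_weight_eq {g n : ℤ} (hn : 0 < n) (hng : 2 * n ≤ 2 * g - 2) :
    ∃ g1 g2 δ : ℕ, StableVine g g1 g2 δ ∧ (δ = 2 ∨ δ = 3) ∧ 2 * (g1 : ℤ) + δ - 2 = n := by
  obtain ⟨t, ht | ht⟩ := Int.even_or_odd' n
  · refine ⟨t.toNat, (g - 1 - t).toNat, 2, ⟨le_rfl, ?_, ?_⟩, Or.inl rfl, ?_⟩ <;> omega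
  · refine ⟨t.toNat, (g - 2 - t).toNat, 3, ⟨by norm_num, fun _ => le_rfl, ?_⟩, Or.inr rfl,
      ?_⟩ <;> omega

/-- `gcd(d−g+1, 2g−2) = 1` iff no stable vine graph of genus `g`
is `d`-special; moreover if some stable vine graph of genus `g` is `d`-special
then one with `δ = 2` or `δ = 3` edges is. -/
theorem stmt14 (g d : ℤ) (hg : 2 ≤ g) :
    (Int.gcd (d - g + 1) (2 * g - 2) = 1 ↔
      ∀ g1 g2 δ : ℕ, StableVine g g1 g2 δ → IsDGeneral (vineK δ) (vineW g1 g2) d) ∧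
    ((∃ g1 g2 δ : ℕ, StableVine g g1 g2 δ ∧ ¬ IsDGeneral (vineK δ) (vineW g1 g2) d) →
      ∃ g1 g2 δ : ℕ, StableVine g g1 g2 δ ∧ (δ = 2 ∨ δ = 3) ∧
        ¬ IsDGeneral (vineK δ) (vineW g1 g2) d) := by
  have hspecial : ∀ {g1 g2 δ : ℕ}, StableVine g g1 g2 δ →
      (¬ IsDGeneral (vineK δ) (vineW g1 g2) d ↔
        2 * g - 2 ∣ (d - g + 1) * (2 * g1 + δ - 2)) := fun hv =>
    not_isDGeneral_vine_iff_dvd d hv.2.2 (by have := hv.weight_pos_lt; omega)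
  have hgeneral : Int.gcd (d - g + 1) (2 * g - 2) = 1 →
      ∀ g1 g2 δ : ℕ, StableVine g g1 g2 δ → IsDGeneral (vineK δ) (vineW g1 g2) d :=
    fun h _ _ _ hv => not_not.1 fun hs =>
      Int.not_dvd_mul_of_gcd_eq_one h hv.weight_pos_lt.1 hv.weight_pos_lt.2
        ((hspecial hv).1 hs)
  have hsmall : Int.gcd (d - g + 1) (2 * g - 2) ≠ 1 →
      ∃ g1 g2 δ : ℕ, StableVine g g1 g2 δ ∧ (δ = 2 ∨ δ = 3) ∧
        ¬ IsDGeneral (vineK δ) (vineW g1 g2) d := by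
    intro h
    obtain ⟨n, hn, hnN, hdvd⟩ := Int.exists_dvd_mul_of_gcd_ne_one (by omega) h
    obtain ⟨g1, g2, δ, hv, hδ, hw⟩ := exists_stableVine_weight_eq hn hnN
    exact ⟨g1, g2, δ, hv, hδ, (hspecial hv).2 (hw ▸ hdvd)⟩
  refine ⟨⟨hgeneral, fun hall => by_contra fun h => ?_⟩,
    fun ⟨g1, g2, δ, hv, hs⟩ => hsmall fun h => hs (hgeneral h g1 g2 δ hv)⟩
  obtain ⟨g1, g2, δ, hv, -, hs⟩ := hsmall h
  exact hs (hall g1 g2 δ hv)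
end
end
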